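/- For every k ≥ 2, the tree R_k admits a b-coloring with k colors; consequently b(R_k) ≥ k. -/

import Mathlib

open SimpleGraph

/-- The degree of a vertex `v` in a simple graph `G`. -/
noncomputable def vdeg {V : Type*} (G : SimpleGraph V) (v : V) : ℕ :=
  Nat.card {w // G.Adj v w}

/-- A Grundy coloring of `G` with `k` colors: a proper coloring whose `k` color classes are
all nonempty (surjectivity) and such that every vertex of a class has a neighbor in every
smaller-indexed class. -/
def IsGrundyColoring {V : Type*} (G : SimpleGraph V) {k : ℕ} (C : V → Fin k) : Prop :=
  (∀ v w, G.Adj v w → C v ≠ C w) ∧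
  Function.Surjective C ∧
  (∀ v : V, ∀ i : Fin k, i < C v → ∃ w, G.Adj v w ∧ C w = i)

/-- The Grundy number of `G`: the largest `k` admitting a Grundy coloring with `k` colors. -/
noncomputable def grundyNum {V : Type*} (G : SimpleGraph V) : ℕ :=
  sSup {k | ∃ C : V → Fin k, IsGrundyColoring G C}

/-- A b-coloring of `G` with `k` colors: a proper coloring such that every color class
contains a vertex having a neighbor in each of the other classes (hence all classes are
nonempty). -/
def IsBColoring {V : Type*} (G : SimpleGraph V) {k : ℕ} (C : V → Fin k) : Prop :=
  (∀ v w, G.Adj v w → C v ≠ C w) ∧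
  (∀ i : Fin k, ∃ v, C v = i ∧ ∀ j : Fin k, j ≠ i → ∃ w, G.Adj v w ∧ C w = j)

/-- The b-chromatic number of `G`: the largest `k` admitting a b-coloring with `k` colors. -/
noncomputable def bChrom {V : Type*} (G : SimpleGraph V) : ℕ :=
  sSup {k | ∃ C : V → Fin k, IsBColoring G C}

/-- The tree `R_k` of radius two: a root (`none`), its `k - 1` children
(`some (Sum.inl i)`), and `k - 2` leaves attached to each child
(`some (Sum.inr (i, j))` is a leaf attached to child `i`). -/
def Rtree (k : ℕ) : SimpleGraph (Option (Fin (k - 1) ⊕ Fin (k - 1) × Fin (k - 2))) :=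
  SimpleGraph.fromRel (fun a b =>
    match a, b with
    | none, some (Sum.inl _) => True
    | some (Sum.inl i), some (Sum.inr (i', _)) => i = i'
    | _, _ => False)

/-!
Color the root `0` and the child `i` with `i + 1`. The `k - 2` leaves below child `i` then
receive, in increasing order, the colors of `{1, …, k - 1} \ {i + 1}`. The root sees every
nonzero color on its children, and child `i` sees `0` on the root and all the remaining colors
on its leaves, so the root and the children are the dominating vertices of the `k` classes.
-/

theorem IsBColoring.surjective {V : Type*} {G : SimpleGraph V} {k : ℕ} {C : V → Fin k}
    (hC : IsBColoring G C) : Function.Surjective C := fun i =>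
  let ⟨v, hv, _⟩ := hC.2 i
  ⟨v, hv⟩

theorem le_bChrom_of_isBColoring {V : Type*} [Finite V] {G : SimpleGraph V} {k : ℕ}
    {C : V → Fin k} (hC : IsBColoring G C) : k ≤ bChrom G := by
  have hbdd : BddAbove {m | ∃ C : V → Fin m, IsBColoring G C} := by
    refine ⟨Nat.card V, fun m ⟨D, hD⟩ => ?_⟩
    simpa using Nat.card_le_card_of_surjective D hD.surjective
  exact le_csSup hbdd ⟨C, hC⟩

section Rtree

variable {k : ℕ}

theorem rtree_adj_none_inl (i : Fin (k - 1)) : (Rtree k).Adj none (some (.inl i)) := by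
  simp [Rtree]

theorem rtree_adj_inl_inr (i : Fin (k - 1)) (j : Fin (k - 2)) :
    (Rtree k).Adj (some (.inl i)) (some (.inr (i, j))) := by
  simp [Rtree]

/-- The `j`-th element of `{1, 2, …} \ {i + 1}`. -/
def leafColor (i j : ℕ) : ℕ := if j < i then j + 1 else j + 2

theorem leafColor_ne_succ (i j : ℕ) : leafColor i j ≠ i + 1 := by
  unfold leafColor; split <;> omega

theorem leafColor_lt {i j n : ℕ} (hj : j < n) : leafColor i j < n + 2 := by
  unfold leafColor; split <;> omega

theorem exists_leafColor_eq {i c n : ℕ} (hi : i < n + 1) (hc : c < n + 2) (hc0 : c ≠ 0)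
    (hci : c ≠ i + 1) :
    ∃ j < n, leafColor i j = c := by
  by_cases h : c ≤ i
  · exact ⟨c - 1, by omega, by unfold leafColor; split <;> omega⟩
  · exact ⟨c - 2, by omega, by unfold leafColor; split <;> omega⟩

def rtreeColor : Option (Fin (k - 1) ⊕ Fin (k - 1) × Fin (k - 2)) → ℕ
  | none => 0
  | some (.inl i) => i + 1
  | some (.inr (i, j)) => leafColor i j

theorem rtreeColor_lt (hk : 0 < k) (v : Option (Fin (k - 1) ⊕ Fin (k - 1) × Fin (k - 2))) :
    rtreeColor v < k := by
  rcases v with _ | i | ⟨i, j⟩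
  · simp only [rtreeColor]; omega
  · simp only [rtreeColor]; omega
  · have := j.isLt
    have := leafColor_lt (i := i) j.isLt
    simp only [rtreeColor]; omega

def rtreeColoring (hk : 0 < k) : Option (Fin (k - 1) ⊕ Fin (k - 1) × Fin (k - 2)) → Fin k :=
  fun v => ⟨rtreeColor v, rtreeColor_lt hk v⟩

theorem rtreeColor_ne_of_adj {v w : Option (Fin (k - 1) ⊕ Fin (k - 1) × Fin (k - 2))}
    (h : (Rtree k).Adj v w) : rtreeColor v ≠ rtreeColor w := by
  rcases v with _ | i | ⟨i, j⟩ <;> rcases w with _ | i' | ⟨i', j'⟩ <;> simp [Rtree] at h <;>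
    simp only [rtreeColor]
  · omega
  · omega
  · subst h; exact (leafColor_ne_succ _ _).symm
  · subst h; exact leafColor_ne_succ _ _

theorem isBColoring_rtreeColoring (hk : 0 < k) : IsBColoring (Rtree k) (rtreeColoring hk) := by
  refine ⟨fun v w h => Fin.ne_of_val_ne (rtreeColor_ne_of_adj h), fun c => ?_⟩
  by_cases hc : c.val = 0
  · refine ⟨none, Fin.ext hc.symm, fun j hj => ?_⟩
    have hj0 : j.val ≠ 0 := fun h => hj (Fin.ext (h.trans hc.symm))
    exact ⟨some (.inl ⟨j - 1, by omega⟩), rtree_adj_none_inl _,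
      Fin.ext (by simp only [rtreeColoring, rtreeColor]; omega)⟩
  · have hi : c.val - 1 < k - 1 := by omega
    refine ⟨some (.inl ⟨c - 1, hi⟩), Fin.ext (by simp only [rtreeColoring, rtreeColor]; omega),
      fun j hj => ?_⟩
    by_cases hj0 : j.val = 0
    · exact ⟨none, (rtree_adj_none_inl _).symm, Fin.ext hj0.symm⟩
    · obtain ⟨m, hm, hleaf⟩ := exists_leafColor_eq (n := k - 2) (i := c - 1) (by omega)
        (by omega) hj0 (by have := Fin.val_ne_of_ne hj; omega)
      exact ⟨some (.inr (⟨c - 1, hi⟩, ⟨m, hm⟩)), rtree_adj_inl_inr _ _, Fin.ext hleaf⟩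

end Rtree

/-- For every `k ≥ 2`, the tree `R_k` admits a b-coloring with `k` colors; consequently
`b(R_k) ≥ k`. -/
theorem stmt12 (k : ℕ) (hk : 2 ≤ k) :
    (∃ C : Option (Fin (k - 1) ⊕ Fin (k - 1) × Fin (k - 2)) → Fin k,
      IsBColoring (Rtree k) C) ∧ k ≤ bChrom (Rtree k) :=
  have hC := isBColoring_rtreeColoring (by omega : 0 < k)
  ⟨⟨_, hC⟩, le_bChrom_of_isBColoring hC⟩
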